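/- arXiv:0906.4768 — 4 statements merged into one kernel-verified Lean document; each statement's English description precedes it below -/
import Mathlib

section
/- A connected simple graph G supports at least one set-valued metric if and only if G is bipartite. -/
/-- A set-valued metric on a simple graph `G`, valued in a type `Ω`. -/
def IsSetValuedMetric {V Ω : Type*} (G : SimpleGraph V) (f : V → V → Set Ω) : Prop :=
  (∀ x y, f x y = f y x) ∧
  (∀ x y, G.Adj x y → (f x y).ncard = 1) ∧
  (∀ x y z, f x z = symmDiff (f x y) (f y z))

/-!
Along a walk from `u` to `v` the triangle law writes `f u v` as the symmetric difference of the
singletons labelling its edges, so `|f u v|` has the parity of the length of the walk. As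
`f u u = ∅`, every closed walk has even length, which characterises bipartite graphs. Conversely,
a 2-colouring `c` yields the metric `f x y = {c x = 0} ∆ {c y = 0}` with values in `Set Unit`.
-/

open SimpleGraph

lemma Set.even_ncard_singleton_symmDiff_iff {α : Type*} {s : Set α} (hs : s.Finite) (a : α) :
    Even (symmDiff {a} s).ncard ↔ ¬Even s.ncard := by
  by_cases ha : a ∈ s
  · have hdiff : symmDiff {a} s = s \ {a} := by
      ext x; by_cases hx : x = a <;> simp [Set.mem_symmDiff, hx, ha]
    have hpos : 0 < s.ncard := (Set.ncard_pos hs).mpr ⟨a, ha⟩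
    rw [hdiff, Set.ncard_sdiff_singleton_of_mem ha]
    conv_rhs => rw [← Nat.sub_add_cancel hpos, Nat.even_add_one, not_not]
  · have hins : symmDiff {a} s = insert a s := by
      ext x; by_cases hx : x = a <;> simp [Set.mem_symmDiff, hx, ha]
    rw [hins, Set.ncard_insert_of_notMem ha hs, Nat.even_add_one]

namespace IsSetValuedMetric

variable {V Ω : Type*} {G : SimpleGraph V} {f : V → V → Set Ω}

lemma self_eq_empty (hf : IsSetValuedMetric G f) (x : V) : f x x = ∅ := by
  simpa using hf.2.2 x x x

lemma exists_eq_singleton_of_adj (hf : IsSetValuedMetric G f) {x y : V} (h : G.Adj x y) :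
    ∃ a, f x y = {a} :=
  Set.ncard_eq_one.mp (hf.2.1 x y h)

lemma finite_of_walk (hf : IsSetValuedMetric G f) {u v : V} (w : G.Walk u v) :
    (f u v).Finite := by
  induction w with
  | nil => simp [hf.self_eq_empty]
  | @cons u x v h _ ih =>
    obtain ⟨a, ha⟩ := hf.exists_eq_singleton_of_adj h
    rw [hf.2.2 u x v, ha]
    exact (Set.finite_singleton a).symmDiff ih

lemma even_ncard_iff_even_length (hf : IsSetValuedMetric G f) {u v : V} (w : G.Walk u v) :
    Even (f u v).ncard ↔ Even w.length := by
  induction w with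
  | nil => simp [hf.self_eq_empty]
  | @cons u x v h p ih =>
    obtain ⟨a, ha⟩ := hf.exists_eq_singleton_of_adj h
    rw [hf.2.2 u x v, ha, Set.even_ncard_singleton_symmDiff_iff (hf.finite_of_walk p),
      Walk.length_cons, Nat.even_add_one, ih]

lemma even_length_of_closed_walk (hf : IsSetValuedMetric G f) {u : V} (w : G.Walk u u) :
    Even w.length := by
  simp [← hf.even_ncard_iff_even_length w, hf.self_eq_empty]

end IsSetValuedMetric

lemma isSetValuedMetric_symmDiff {V Ω : Type*} {G : SimpleGraph V} (g : V → Set Ω)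
    (hadj : ∀ x y, G.Adj x y → (symmDiff (g x) (g y)).ncard = 1) :
    IsSetValuedMetric G (fun x y => symmDiff (g x) (g y)) :=
  ⟨fun _ _ => symmDiff_comm _ _, hadj, fun _ _ _ => by
    simp only [symmDiff_assoc, symmDiff_symmDiff_cancel_left]⟩

lemma SimpleGraph.Coloring.isSetValuedMetric {V : Type*} {G : SimpleGraph V}
    (c : G.Coloring (Fin 2)) :
    IsSetValuedMetric G (fun x y => symmDiff {_u : Unit | c x = 0} {_u | c y = 0}) := by
  refine isSetValuedMetric_symmDiff _ fun x y hxy => ?_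
  have hne := c.valid hxy
  have huniv : symmDiff {_u : Unit | c x = 0} {_u | c y = 0} = Set.univ := by
    ext
    simp only [Set.mem_symmDiff, Set.mem_ofPred_eq, Set.mem_univ, iff_true, Fin.ext_iff] at hne ⊢
    omega
  rw [huniv, Set.ncard_univ, Nat.card_unique]

theorem stmt0_general {V : Type*} (G : SimpleGraph V) :
    (∃ (Ω : Type) (f : V → V → Set Ω), IsSetValuedMetric G f) ↔ G.Colorable 2 := by
  constructor
  · rintro ⟨Ω, f, hf⟩
    exact two_colorable_iff_forall_loop_even.mpr fun _ => hf.even_length_of_closed_walk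
  · rintro ⟨c⟩
    exact ⟨Unit, _, c.isSetValuedMetric⟩

/-- A connected simple graph supports at least one set-valued metric
iff it is bipartite (i.e. 2-colorable). -/
theorem stmt0 {V : Type*} (G : SimpleGraph V) (hG : G.Connected) :
    (∃ (Ω : Type) (f : V → V → Set Ω), IsSetValuedMetric G f) ↔ G.Colorable 2 :=
  stmt0_general G
end

section
/- If Ω(-,-) is a set-valued metric on a connected simple graph G equipped with an equivariant involution x ↦ -x, then the diameter of G is at least |Ω|. -/
lemma walk_bound {V Ω : Type*} [Finite Ω] (G : SimpleGraph V)
    (f : V → V → Set Ω) (hf : IsSetValuedMetric G f)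
    {x y : V} (p : G.Walk x y) : (f x y).ncard ≤ p.length := by
  obtain ⟨hsymm, hadj, htri⟩ := hf
  induction p with
  | nil =>
      have h : ∀ a, f a a = ∅ := fun a => by
        have := htri a a a; simpa using this
      simp [h]
  | @cons a b c hab p ih =>
      have h : f a c = symmDiff (f a b) (f b c) := htri a b c
      have hsub : f a c ⊆ f a b ∪ f b c := by
        rw [h]; exact symmDiff_le_sup
      calc (f a c).ncard ≤ (f a b ∪ f b c).ncard :=
            Set.ncard_le_ncard hsub (Set.toFinite _)
        _ ≤ (f a b).ncard + (f b c).ncard := Set.ncard_union_le _ _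
        _ ≤ 1 + p.length := by
            rw [hadj a b hab]; exact Nat.add_le_add_left ih 1
        _ = (SimpleGraph.Walk.cons hab p).length := by
            simp [SimpleGraph.Walk.length_cons, Nat.add_comm]

/-- A connected graph with a set-valued metric and an equivariant involution
has diameter at least `|Ω|`: some pair of vertices is at distance `≥ |Ω|`. -/
theorem stmt3 {V Ω : Type*} [Finite Ω] (G : SimpleGraph V) (hG : G.Connected)
    (f : V → V → Set Ω) (hf : IsSetValuedMetric G f)
    (neg : V → V) (hinv : ∀ x, neg (neg x) = x)
    (hequiv : ∀ x y, f x (neg y) = (f x y)ᶜ) :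
    ∃ x y : V, Nat.card Ω ≤ G.dist x y := by
  obtain ⟨x⟩ := hG.nonempty
  refine ⟨x, neg x, ?_⟩
  have hxx : f x x = ∅ := by
    have h := hf.2.2 x x x
    simpa using h
  have huniv : f x (neg x) = Set.univ := by
    rw [hequiv, hxx, Set.compl_empty]
  have hreach := hG.preconnected x (neg x)
  obtain ⟨p, hp⟩ := hreach.exists_walk_length_eq_dist
  calc Nat.card Ω = (f x (neg x)).ncard := by rw [huniv, Set.ncard_univ]
    _ ≤ p.length := walk_bound G f hf p
    _ = G.dist x (neg x) := hp
end

section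
/- Let G be a connected simple graph with a set-valued metric Ω(-,-) valued in a finite set Ω, equipped with an involution v ↦ -v on the vertices that is both equivariant (Ω(x,-y) = Ω \ Ω(x,y)) and a graph automorphism. If there exists an Ω-accessible vertex x₀ (i.e. d_G(x₀,y)=|Ω(x₀,y)| for all y), then the diameter of G is exactly |Ω|. -/
/-- If a connected graph has a set-valued metric with an involution `neg` that is
both equivariant and a graph automorphism, and there exists an `Ω`-accessible
vertex `x₀`, then the diameter is exactly `|Ω|`: all distances are at most `|Ω|`
and some distance equals `|Ω|`. -/
theorem stmt4 {V Ω : Type*} [Finite Ω] (G : SimpleGraph V) (hG : G.Connected)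
    (f : V → V → Set Ω) (hf : IsSetValuedMetric G f)
    (neg : V → V) (hinv : ∀ x, neg (neg x) = x)
    (hequiv : ∀ x y, f x (neg y) = (f x y)ᶜ)
    (haut : ∀ x y, G.Adj (neg x) (neg y) ↔ G.Adj x y)
    (x₀ : V) (hacc : ∀ y, G.dist x₀ y = (f x₀ y).ncard) :
    (∀ x y : V, G.dist x y ≤ Nat.card Ω) ∧ (∃ x y : V, G.dist x y = Nat.card Ω) := by
  obtain ⟨hsymm, hedge, htri⟩ := hf
  have hxx : ∀ x, f x x = (∅ : Set Ω) := by
    intro x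
    have := htri x x x
    simpa [symmDiff_self] using this
  -- neg is a graph hom
  let φ : G →g G := ⟨neg, fun {a b} h => (haut a b).mpr h⟩
  have hdistle : ∀ a b : V, G.dist (neg a) (neg b) ≤ G.dist a b := by
    intro a b
    obtain ⟨p, hp⟩ := (hG a b).exists_walk_length_eq_dist
    calc G.dist (neg a) (neg b) ≤ (p.map φ).length := SimpleGraph.dist_le _
      _ = G.dist a b := by rw [SimpleGraph.Walk.length_map, hp]
  have hdisteq : ∀ a b : V, G.dist (neg a) (neg b) = G.dist a b := by
    intro a b
    refine le_antisymm (hdistle a b) ?_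
    have := hdistle (neg a) (neg b)
    rwa [hinv, hinv] at this
  -- distance from neg x₀
  have hacc' : ∀ y : V, G.dist (neg x₀) y = ((f x₀ y)ᶜ).ncard := by
    intro y
    have h1 : G.dist (neg x₀) y = G.dist x₀ (neg y) := by
      rw [← hdisteq x₀ (neg y), hinv]
    rw [h1, hacc, hequiv]
  constructor
  · intro x y
    have hA : (f x₀ x).ncard + ((f x₀ x)ᶜ).ncard = Nat.card Ω :=
      Set.ncard_add_ncard_compl _ (Set.toFinite _) (Set.toFinite _)
    have hB : (f x₀ y).ncard + ((f x₀ y)ᶜ).ncard = Nat.card Ω :=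
      Set.ncard_add_ncard_compl _ (Set.toFinite _) (Set.toFinite _)
    have h1 : G.dist x y ≤ (f x₀ x).ncard + (f x₀ y).ncard := by
      calc G.dist x y ≤ G.dist x x₀ + G.dist x₀ y := hG.dist_triangle
        _ = (f x₀ x).ncard + (f x₀ y).ncard := by rw [SimpleGraph.dist_comm, hacc, hacc]
    have h2 : G.dist x y ≤ ((f x₀ x)ᶜ).ncard + ((f x₀ y)ᶜ).ncard := by
      calc G.dist x y ≤ G.dist x (neg x₀) + G.dist (neg x₀) y := hG.dist_triangle
        _ = ((f x₀ x)ᶜ).ncard + ((f x₀ y)ᶜ).ncard := by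
            rw [SimpleGraph.dist_comm, hacc', hacc']
    omega
  · refine ⟨x₀, neg x₀, ?_⟩
    rw [hacc, hequiv, hxx, Set.compl_empty, Set.ncard_univ]
end

section
/- For n ≥ 2, the number of codimension-two flats of the type D_n reflection arrangement equals (1/6)·n(n-1)(3n²-11n+13). -/
/-!
Every codimension-two flat of `D_n` is `H ⊓ H'` for two distinct hyperplanes `x_j = a x_i`
(`i < j`, `a = ±1`), and a case analysis on how the index pairs meet puts each such intersection
into exactly one normal form: `x_i = x_j = 0` (one per pair `i < j`); `x_j = a x_i, x_l = b x_i`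
with `i < j < l` (four per triple); or `x_j = a x_i, x_l = b x_k` for disjoint pairs with
`i < k` (four per unordered pair of disjoint pairs, of which there are `C(n,2) C(n-2,2) / 2`).
The normal form is read off the flat: the coordinates whose basis vector leaves it give the
index set, and test vectors `e_i + a e_j` fix the pairing and the signs. Summing,
`C(n,2) + 4 C(n,3) + 2 C(n,2) C(n-2,2) = n(n-1)(3n²-11n+13)/6`.
-/

open LinearMap

/-- The type `D_n` reflection arrangement in `ℝⁿ`: hyperplanes `xᵢ = xⱼ` and
`xᵢ = -xⱼ` for `i ≠ j`. -/
def DnArrangement (n : ℕ) : Set (Submodule ℝ (Fin n → ℝ)) :=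
  {H | ∃ i j : Fin n, i ≠ j ∧
        (H = LinearMap.ker ((LinearMap.proj i : (Fin n → ℝ) →ₗ[ℝ] ℝ) - LinearMap.proj j) ∨
         H = LinearMap.ker ((LinearMap.proj i : (Fin n → ℝ) →ₗ[ℝ] ℝ) + LinearMap.proj j))}

/-- The codimension-two flats of an arrangement: intersections of subfamilies
of hyperplanes having dimension `n - 2`. -/
def codimTwoFlats (n : ℕ) (A : Set (Submodule ℝ (Fin n → ℝ))) :
    Set (Submodule ℝ (Fin n → ℝ)) :=
  {X | (∃ B ⊆ A, X = sInf B) ∧ Module.finrank ℝ X = n - 2}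

open Module Finset

theorem finrank_inf_add_two_of_ne {K V : Type*} [DivisionRing K] [AddCommGroup V] [Module K V]
    [FiniteDimensional K V] {H₁ H₂ : Submodule K V} (h₁ : finrank K H₁ + 1 = finrank K V)
    (h₂ : finrank K H₂ + 1 = finrank K V) (hne : H₁ ≠ H₂) :
    finrank K ↥(H₁ ⊓ H₂) + 2 = finrank K V := by
  have hlt : H₁ < H₁ ⊔ H₂ := lt_of_le_of_ne le_sup_left fun h =>
    hne (Submodule.eq_of_le_of_finrank_eq (le_sup_right.trans h.symm.le) (by omega)).symm
  have := Submodule.finrank_lt_finrank_of_lt hlt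
  have := Submodule.finrank_le (H₁ ⊔ H₂)
  have := Submodule.finrank_sup_add_finrank_inf_eq H₁ H₂
  omega

theorem codimTwoFlats_eq_of_finrank {n : ℕ} (hn : 2 ≤ n) {A : Set (Submodule ℝ (Fin n → ℝ))}
    (hA : ∀ H ∈ A, finrank ℝ H + 1 = n) :
    codimTwoFlats n A = {X | ∃ H₁ ∈ A, ∃ H₂ ∈ A, H₁ ≠ H₂ ∧ X = H₁ ⊓ H₂} := by
  have hV : finrank ℝ (Fin n → ℝ) = n := finrank_fin_fun ℝ
  have hA' : ∀ H ∈ A, finrank ℝ H + 1 = finrank ℝ (Fin n → ℝ) := by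
    simpa only [hV] using hA
  ext X
  constructor
  · rintro ⟨⟨B, hBA, rfl⟩, hrk⟩
    obtain ⟨H₁, hH₁, H₂, hH₂, hne⟩ : ∃ H₁ ∈ B, ∃ H₂ ∈ B, H₁ ≠ H₂ := by
      by_contra! hB
      rcases Set.Subsingleton.eq_empty_or_singleton hB with rfl | ⟨H, rfl⟩
      · rw [sInf_empty, finrank_top] at hrk
        omega
      · have := hA H (hBA rfl)
        rw [sInf_singleton] at hrk
        omega
    refine ⟨H₁, hBA hH₁, H₂, hBA hH₂, hne, Submodule.eq_of_le_of_finrank_eq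
      (le_inf (sInf_le hH₁) (sInf_le hH₂)) ?_⟩
    have := finrank_inf_add_two_of_ne (hA' _ (hBA hH₁)) (hA' _ (hBA hH₂)) hne
    omega
  · rintro ⟨H₁, h₁, H₂, h₂, hne, rfl⟩
    refine ⟨⟨{H₁, H₂}, Set.insert_subset h₁ (Set.singleton_subset_iff.2 h₂), sInf_pair.symm⟩, ?_⟩
    have := finrank_inf_add_two_of_ne (hA' _ h₁) (hA' _ h₂) hne
    omega

theorem Finset.disjoint_pair_pair {α : Type*} [DecidableEq α] {i j k l : α} :
    Disjoint ({i, j} : Finset α) {k, l} ↔ i ≠ k ∧ i ≠ l ∧ j ≠ k ∧ j ≠ l := by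
  simp only [disjoint_insert_left, disjoint_singleton_left, mem_insert, mem_singleton]
  tauto

theorem Nat.sum_range_choose_eq_choose_succ (n k : ℕ) :
    ∑ m ∈ range n, m.choose k = n.choose (k + 1) := by
  induction n with
  | zero => simp
  | succ n ih => rw [sum_range_succ, ih, Nat.choose_succ_succ' n k, add_comm]

namespace TypeD

variable {n : ℕ}

theorem sign_mul_self (a : ℤˣ) : (a : ℝ) * a = 1 := by
  rcases Int.units_eq_one_or a with rfl | rfl <;> norm_num

theorem sign_ne_zero (a : ℤˣ) : (a : ℝ) ≠ 0 := by
  rcases Int.units_eq_one_or a with rfl | rfl <;> norm_num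

noncomputable def hyperplane (e : Fin n × Fin n) (a : ℤˣ) : Submodule ℝ (Fin n → ℝ) :=
  LinearMap.ker (LinearMap.proj e.2 - (a : ℝ) • LinearMap.proj e.1)

theorem mem_hyperplane {e : Fin n × Fin n} {a : ℤˣ} {x : Fin n → ℝ} :
    x ∈ hyperplane e a ↔ x e.2 = a * x e.1 := by
  simp [hyperplane, sub_eq_zero]

theorem hyperplane_swap (i j : Fin n) (a : ℤˣ) : hyperplane (i, j) a = hyperplane (j, i) a := by
  ext x
  simp only [mem_hyperplane]
  constructor <;> intro h
  · linear_combination (-a : ℝ) * h - x i * sign_mul_self a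
  · linear_combination (-a : ℝ) * h - x j * sign_mul_self a

theorem hyperplane_inf_hyperplane_chain (i j l : Fin n) (a b : ℤˣ) :
    hyperplane (i, j) a ⊓ hyperplane (j, l) b =
      hyperplane (i, j) a ⊓ hyperplane (i, l) (b * a) := by
  ext x
  simp only [Submodule.mem_inf, mem_hyperplane, Units.val_mul, Int.cast_mul]
  constructor <;> rintro ⟨h₁, h₂⟩ <;> refine ⟨h₁, ?_⟩ <;> rw [h₂, h₁] <;> ring

theorem ker_proj_sub_proj (i j : Fin n) :
    LinearMap.ker ((LinearMap.proj i : (Fin n → ℝ) →ₗ[ℝ] ℝ) - LinearMap.proj j) =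
      hyperplane (i, j) 1 := by
  ext x
  simp [mem_hyperplane, sub_eq_zero, eq_comm]

theorem ker_proj_add_proj (i j : Fin n) :
    LinearMap.ker ((LinearMap.proj i : (Fin n → ℝ) →ₗ[ℝ] ℝ) + LinearMap.proj j) =
      hyperplane (i, j) (-1) := by
  ext x
  simp only [LinearMap.mem_ker, LinearMap.add_apply, LinearMap.proj_apply, mem_hyperplane]
  constructor <;> intro h <;> push_cast at h ⊢ <;> linarith

def edges (n : ℕ) : Finset (Fin n × Fin n) := {e | e.1 < e.2}

theorem mem_edges {i j : Fin n} : (i, j) ∈ edges n ↔ i < j := by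
  simp [edges]

theorem mem_DnArrangement {H : Submodule ℝ (Fin n → ℝ)} :
    H ∈ DnArrangement n ↔ ∃ e ∈ edges n, ∃ a, H = hyperplane e a := by
  constructor
  · rintro ⟨i, j, hij, rfl | rfl⟩ <;> rcases hij.lt_or_gt with h | h
    · exact ⟨(i, j), mem_edges.2 h, 1, ker_proj_sub_proj i j⟩
    · exact ⟨(j, i), mem_edges.2 h, 1, (ker_proj_sub_proj i j).trans (hyperplane_swap i j 1)⟩
    · exact ⟨(i, j), mem_edges.2 h, -1, ker_proj_add_proj i j⟩
    · exact ⟨(j, i), mem_edges.2 h, -1, (ker_proj_add_proj i j).trans (hyperplane_swap i j _)⟩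
  · rintro ⟨e, he, a, rfl⟩
    rcases Int.units_eq_one_or a with rfl | rfl
    · exact ⟨e.1, e.2, (mem_edges.1 he).ne, Or.inl (ker_proj_sub_proj e.1 e.2).symm⟩
    · exact ⟨e.1, e.2, (mem_edges.1 he).ne, Or.inr (ker_proj_add_proj e.1 e.2).symm⟩

theorem finrank_hyperplane {e : Fin n × Fin n} (he : e.1 ≠ e.2) (a : ℤˣ) :
    finrank ℝ (hyperplane e a) + 1 = n := by
  have hf : (LinearMap.proj e.2 - (a : ℝ) • LinearMap.proj e.1 : Dual ℝ (Fin n → ℝ)) ≠ 0 := by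
    intro h
    simpa [Pi.single_apply, he] using LinearMap.congr_fun h (Pi.single e.2 1)
  have h := Dual.finrank_ker_add_one_of_ne_zero hf
  rwa [finrank_fin_fun] at h

theorem single_mem_hyperplane {e : Fin n × Fin n} (he : e.1 ≠ e.2) (a : ℤˣ) (m : Fin n) :
    Pi.single m (1 : ℝ) ∈ hyperplane e a ↔ m ≠ e.1 ∧ m ≠ e.2 := by
  rw [mem_hyperplane]
  by_cases h₁ : m = e.1
  · subst h₁
    simpa [he.symm] using (sign_ne_zero a).symm
  · by_cases h₂ : m = e.2
    · subst h₂
      simp [he]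
    · simp [Ne.symm h₁, Ne.symm h₂, h₁, h₂]

def support (X : Submodule ℝ (Fin n → ℝ)) : Set (Fin n) := {m | Pi.single m 1 ∉ X}

theorem support_hyperplane_inf_hyperplane {e f : Fin n × Fin n} (he : e ∈ edges n)
    (hf : f ∈ edges n) (a b : ℤˣ) :
    support (hyperplane e a ⊓ hyperplane f b) = {e.1, e.2, f.1, f.2} := by
  ext m
  simp only [support, Set.mem_ofPred_eq, Submodule.mem_inf,
    single_mem_hyperplane (mem_edges.1 he).ne, single_mem_hyperplane (mem_edges.1 hf).ne,
    Set.mem_insert_iff, Set.mem_singleton_iff]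
  tauto

def edgeVector (e : Fin n × Fin n) (a : ℤˣ) : Fin n → ℝ :=
  Pi.single e.1 1 + Pi.single e.2 (a : ℝ)

theorem edgeVector_mem_hyperplane {e : Fin n × Fin n} (he : e.1 ≠ e.2) (a : ℤˣ) :
    edgeVector e a ∈ hyperplane e a := by
  simp [edgeVector, mem_hyperplane, he, he.symm]

theorem edgeVector_mem_hyperplane_of_disjoint {e f : Fin n × Fin n}
    (hef : Disjoint ({e.1, e.2} : Finset (Fin n)) {f.1, f.2}) (a b : ℤˣ) :
    edgeVector e a ∈ hyperplane f b := by
  obtain ⟨h₁, h₂, h₃, h₄⟩ := disjoint_pair_pair.1 hef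
  simp [edgeVector, mem_hyperplane, h₁.symm, h₂.symm, h₃.symm, h₄.symm]

theorem eq_of_edgeVector_mem_hyperplane {e g : Fin n × Fin n} {a c : ℤˣ} (he : e ∈ edges n)
    (hg : g ∈ edges n) (hge : g.1 = e.1 ∨ g.1 = e.2) (h : edgeVector e a ∈ hyperplane g c) :
    g = e ∧ c = a := by
  obtain ⟨i, j⟩ := e
  obtain ⟨k, l⟩ := g
  simp only [mem_edges] at he hg
  simp only [edgeVector, mem_hyperplane, Pi.add_apply, Pi.single_apply] at h
  rcases hge with rfl | rfl
  · by_cases hl : l = j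
    · subst hl
      simp [hg.ne', he.ne] at h
      exact ⟨rfl, Units.ext h.symm⟩
    · simp [hg.ne', hl, he.ne] at h
      exact absurd h.symm (sign_ne_zero c)
  · simp [(he.trans hg).ne', hg.ne', he.ne'] at h

theorem hyperplane_inj {e f : Fin n × Fin n} {a b : ℤˣ} (he : e ∈ edges n) (hf : f ∈ edges n) :
    hyperplane e a = hyperplane f b ↔ e = f ∧ a = b := by
  refine ⟨fun h => ?_, fun ⟨hef, hab⟩ => hef ▸ hab ▸ rfl⟩
  have hfe : f.1 = e.1 ∨ f.1 = e.2 := by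
    have := single_mem_hyperplane (mem_edges.1 he).ne a f.1
    rw [h, single_mem_hyperplane (mem_edges.1 hf).ne] at this
    tauto
  obtain ⟨rfl, rfl⟩ := eq_of_edgeVector_mem_hyperplane he hf hfe
    (h ▸ edgeVector_mem_hyperplane (mem_edges.1 he).ne a)
  exact ⟨rfl, rfl⟩

theorem eq_or_eq_of_inf_le_hyperplane {e f g : Fin n × Fin n} {a b c : ℤˣ} (he : e ∈ edges n)
    (hf : f ∈ edges n) (hef : Disjoint ({e.1, e.2} : Finset (Fin n)) {f.1, f.2})
    (hg : g ∈ edges n) (h : hyperplane e a ⊓ hyperplane f b ≤ hyperplane g c) :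
    (g = e ∧ c = a) ∨ (g = f ∧ c = b) := by
  have hg₁ : g.1 ∈ support (hyperplane e a ⊓ hyperplane f b) := fun hmem =>
    ((single_mem_hyperplane (mem_edges.1 hg).ne c g.1).1 (h hmem)).1 rfl
  rw [support_hyperplane_inf_hyperplane he hf] at hg₁
  obtain hge | hgf : (g.1 = e.1 ∨ g.1 = e.2) ∨ (g.1 = f.1 ∨ g.1 = f.2) := by
    simpa [or_assoc] using hg₁
  · refine .inl (eq_of_edgeVector_mem_hyperplane he hg hge (h ⟨?_, ?_⟩))
    exacts [edgeVector_mem_hyperplane (mem_edges.1 he).ne a,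
      edgeVector_mem_hyperplane_of_disjoint hef a b]
  · refine .inr (eq_of_edgeVector_mem_hyperplane hf hg hgf (h ⟨?_, ?_⟩))
    exacts [edgeVector_mem_hyperplane_of_disjoint hef.symm b a,
      edgeVector_mem_hyperplane (mem_edges.1 hf).ne b]

def triples (n : ℕ) : Finset (Fin n × Fin n × Fin n) := {t | t.1 < t.2.1 ∧ t.2.1 < t.2.2}

def disjointEdgePairs (n : ℕ) : Finset ((Fin n × Fin n) × (Fin n × Fin n)) :=
  {p ∈ edges n ×ˢ edges n | Disjoint ({p.1.1, p.1.2} : Finset (Fin n)) {p.2.1, p.2.2}}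

def sortedDisjointEdgePairs (n : ℕ) : Finset ((Fin n × Fin n) × (Fin n × Fin n)) :=
  {p ∈ disjointEdgePairs n | p.1.1 < p.2.1}

theorem mem_triples {i j l : Fin n} : (i, j, l) ∈ triples n ↔ i < j ∧ j < l := by
  simp [triples]

theorem mem_sortedDisjointEdgePairs {e f : Fin n × Fin n} :
    (e, f) ∈ sortedDisjointEdgePairs n ↔ e ∈ edges n ∧ f ∈ edges n ∧
      Disjoint ({e.1, e.2} : Finset (Fin n)) {f.1, f.2} ∧ e.1 < f.1 := by
  simp [sortedDisjointEdgePairs, disjointEdgePairs, and_assoc]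

noncomputable def zeroFlat (e : Fin n × Fin n) : Submodule ℝ (Fin n → ℝ) :=
  hyperplane e 1 ⊓ hyperplane e (-1)

noncomputable def triangleFlat (t : Fin n × Fin n × Fin n) (s : ℤˣ × ℤˣ) :
    Submodule ℝ (Fin n → ℝ) :=
  hyperplane (t.1, t.2.1) s.1 ⊓ hyperplane (t.1, t.2.2) s.2

noncomputable def productFlat (p : (Fin n × Fin n) × (Fin n × Fin n)) (s : ℤˣ × ℤˣ) :
    Submodule ℝ (Fin n → ℝ) :=
  hyperplane p.1 s.1 ⊓ hyperplane p.2 s.2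

def zeroFlats (n : ℕ) : Set (Submodule ℝ (Fin n → ℝ)) := zeroFlat '' ↑(edges n)

def triangleFlats (n : ℕ) : Set (Submodule ℝ (Fin n → ℝ)) :=
  Function.uncurry triangleFlat '' (↑(triples n) ×ˢ Set.univ)

def productFlats (n : ℕ) : Set (Submodule ℝ (Fin n → ℝ)) :=
  Function.uncurry productFlat '' (↑(sortedDisjointEdgePairs n) ×ˢ Set.univ)

def normalFormFlats (n : ℕ) : Set (Submodule ℝ (Fin n → ℝ)) :=
  zeroFlats n ∪ triangleFlats n ∪ productFlats n

theorem hyperplane_inf_hyperplane_mem_normalFormFlats {e f : Fin n × Fin n} {a b : ℤˣ}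
    (he : e ∈ edges n) (hf : f ∈ edges n) (hne : (e, a) ≠ (f, b)) :
    hyperplane e a ⊓ hyperplane f b ∈ normalFormFlats n := by
  wlog hle : e.1 ≤ f.1 generalizing e f a b
  · rw [inf_comm]
    exact this hf he hne.symm (le_of_not_ge hle)
  have triangle {i j l : Fin n} (s : ℤˣ × ℤˣ) (ht : i < j ∧ j < l) :
      triangleFlat (i, j, l) s ∈ normalFormFlats n :=
    Or.inl (Or.inr ⟨((i, j, l), s), ⟨mem_triples.2 ht, trivial⟩, rfl⟩)
  obtain ⟨i, j⟩ := e
  obtain ⟨k, l⟩ := f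
  simp only [mem_edges] at he hf hle
  rcases hle.eq_or_lt with rfl | hik
  · rcases lt_trichotomy j l with hjl | rfl | hlj
    · exact triangle (a, b) ⟨he, hjl⟩
    · have hab : a ≠ b := fun h => hne (h ▸ rfl)
      refine Or.inl (Or.inl ⟨(i, j), mem_edges.2 he, ?_⟩)
      rcases Int.units_eq_one_or a with rfl | rfl <;>
        rcases Int.units_eq_one_or b with rfl | rfl
      exacts [absurd rfl hab, rfl, inf_comm _ _, absurd rfl hab]
    · rw [inf_comm]
      exact triangle (b, a) ⟨hf, hlj⟩
  · by_cases hjk : j = k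
    · subst hjk
      rw [hyperplane_inf_hyperplane_chain]
      exact triangle (a, b * a) ⟨he, hf⟩
    by_cases hjl : j = l
    · subst hjl
      rw [hyperplane_swap k j, hyperplane_inf_hyperplane_chain, inf_comm]
      exact triangle (b * a, a) ⟨hik, hf⟩
    refine Or.inr ⟨(((i, j), (k, l)), (a, b)), ⟨mem_sortedDisjointEdgePairs.2 ?_, trivial⟩, rfl⟩
    simp only [mem_edges, disjoint_pair_pair]
    omega

theorem codimTwoFlats_DnArrangement (hn : 2 ≤ n) :
    codimTwoFlats n (DnArrangement n) = normalFormFlats n := by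
  rw [codimTwoFlats_eq_of_finrank hn fun H hH => ?_]
  · have pair_mem {e f : Fin n × Fin n} {a b : ℤˣ} (he : e ∈ edges n) (hf : f ∈ edges n)
        (hne : (e, a) ≠ (f, b)) : hyperplane e a ⊓ hyperplane f b ∈
          {X | ∃ H₁ ∈ DnArrangement n, ∃ H₂ ∈ DnArrangement n, H₁ ≠ H₂ ∧ X = H₁ ⊓ H₂} :=
      ⟨_, mem_DnArrangement.2 ⟨e, he, a, rfl⟩, _, mem_DnArrangement.2 ⟨f, hf, b, rfl⟩,
        fun h => hne (Prod.ext_iff.2 ((hyperplane_inj he hf).1 h)), rfl⟩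
    ext X
    constructor
    · rintro ⟨H₁, h₁, H₂, h₂, hne, rfl⟩
      obtain ⟨e, he, a, rfl⟩ := mem_DnArrangement.1 h₁
      obtain ⟨f, hf, b, rfl⟩ := mem_DnArrangement.1 h₂
      exact hyperplane_inf_hyperplane_mem_normalFormFlats he hf fun h => hne (by simp_all)
    · rintro ((⟨e, he, rfl⟩ | ⟨⟨⟨i, j, l⟩, s⟩, hts, rfl⟩) | ⟨⟨⟨e, f⟩, s⟩, hps, rfl⟩)
      · exact pair_mem he he (by simp)
      · obtain ⟨hij, hjl⟩ := mem_triples.1 hts.1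
        exact pair_mem (mem_edges.2 hij) (mem_edges.2 (hij.trans hjl)) (by simp [hjl.ne])
      · obtain ⟨he, hf, -, hef⟩ := mem_sortedDisjointEdgePairs.1 hps.1
        exact pair_mem he hf (by simp [Prod.ext_iff, hef.ne])
  · obtain ⟨e, he, a, rfl⟩ := mem_DnArrangement.1 hH
    exact finrank_hyperplane (mem_edges.1 he).ne a

theorem support_zeroFlat {i j : Fin n} (he : (i, j) ∈ edges n) :
    support (zeroFlat (i, j)) = {i, j} := by
  rw [zeroFlat, support_hyperplane_inf_hyperplane he he]
  ext m
  simp only [Set.mem_insert_iff, Set.mem_singleton_iff]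
  tauto

theorem support_triangleFlat {i j l : Fin n} (ht : (i, j, l) ∈ triples n) (s : ℤˣ × ℤˣ) :
    support (triangleFlat (i, j, l) s) = {i, j, l} := by
  obtain ⟨hij, hjl⟩ := mem_triples.1 ht
  rw [triangleFlat,
    support_hyperplane_inf_hyperplane (mem_edges.2 hij) (mem_edges.2 (hij.trans hjl))]
  ext m
  simp only [Set.mem_insert_iff, Set.mem_singleton_iff]
  tauto

theorem support_productFlat {e f : Fin n × Fin n} (hp : (e, f) ∈ sortedDisjointEdgePairs n)
    (s : ℤˣ × ℤˣ) : support (productFlat (e, f) s) = {e.1, e.2, f.1, f.2} :=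
  support_hyperplane_inf_hyperplane (mem_sortedDisjointEdgePairs.1 hp).1
    (mem_sortedDisjointEdgePairs.1 hp).2.1 s.1 s.2

theorem zeroFlat_injOn : Set.InjOn zeroFlat (edges n : Set (Fin n × Fin n)) := by
  rintro ⟨i, j⟩ he ⟨k, l⟩ hf h
  have hij : i < j := mem_edges.1 he
  have hkl : k < l := mem_edges.1 hf
  have hs := congrArg support h
  rw [support_zeroFlat he, support_zeroFlat hf] at hs
  simp only [Set.ext_iff, Set.mem_insert_iff, Set.mem_singleton_iff] at hs
  have := hs i; have := hs j; have := hs k; have := hs l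
  simp only [Prod.mk.injEq]
  omega

theorem triangleFlat_injOn : Set.InjOn (Function.uncurry triangleFlat)
    ((triples n : Set (Fin n × Fin n × Fin n)) ×ˢ Set.univ) := by
  rintro ⟨⟨i, j, l⟩, a, b⟩ ⟨ht, -⟩ ⟨⟨i', j', l'⟩, a', b'⟩ ⟨ht', -⟩ h
  dsimp only at ht ht'
  obtain ⟨hij, hjl⟩ := mem_triples.1 ht
  obtain ⟨hij', hjl'⟩ := mem_triples.1 ht'
  simp only [Function.uncurry_apply_pair] at h
  obtain ⟨rfl, rfl, rfl⟩ : i = i' ∧ j = j' ∧ l = l' := by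
    have hs := congrArg support h
    rw [support_triangleFlat ht, support_triangleFlat ht'] at hs
    simp only [Set.ext_iff, Set.mem_insert_iff, Set.mem_singleton_iff] at hs
    have := hs i; have := hs j; have := hs l; have := hs i'; have := hs j'; have := hs l'
    omega
  have hil := hij.trans hjl
  have hv : Pi.single i 1 + Pi.single j (a : ℝ) + Pi.single l (b : ℝ) ∈
      triangleFlat (i, j, l) (a, b) := by
    simp [triangleFlat, mem_hyperplane, hij.ne, hij.ne', hjl.ne, hjl.ne', hil.ne, hil.ne']
  rw [h] at hv
  simp [triangleFlat, mem_hyperplane, hij.ne, hij.ne', hjl.ne, hjl.ne', hil.ne, hil.ne'] at hv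
  simp [Units.ext hv.1, Units.ext hv.2]

theorem productFlat_injOn : Set.InjOn (Function.uncurry productFlat)
    ((sortedDisjointEdgePairs n : Set ((Fin n × Fin n) × (Fin n × Fin n))) ×ˢ Set.univ) := by
  rintro ⟨⟨e, f⟩, a, b⟩ ⟨hp, -⟩ ⟨⟨e', f'⟩, a', b'⟩ ⟨hp', -⟩ h
  dsimp only at hp hp'
  obtain ⟨he, hf, hef, hlt⟩ := mem_sortedDisjointEdgePairs.1 hp
  obtain ⟨he', hf', -, hlt'⟩ := mem_sortedDisjointEdgePairs.1 hp'
  simp only [Function.uncurry_apply_pair, productFlat] at h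
  have of_le {g c} (hg : g ∈ edges n)
      (hle : hyperplane e' a' ⊓ hyperplane f' b' ≤ hyperplane g c) :=
    eq_or_eq_of_inf_le_hyperplane he hf hef hg (h ▸ hle)
  rcases of_le he' inf_le_left with ⟨rfl, rfl⟩ | ⟨rfl, rfl⟩ <;>
    rcases of_le hf' inf_le_right with ⟨rfl, rfl⟩ | ⟨rfl, rfl⟩
  · exact absurd hlt' (lt_irrefl _)
  · rfl
  · exact absurd (hlt.trans hlt') (lt_irrefl _)
  · exact absurd hlt' (lt_irrefl _)

theorem disjoint_zeroFlats_triangleFlats : Disjoint (zeroFlats n) (triangleFlats n) := by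
  rw [Set.disjoint_left]
  rintro _ ⟨⟨i, j⟩, he, rfl⟩ ⟨⟨⟨i', j', l'⟩, s⟩, ⟨ht, -⟩, h⟩
  have hs := congrArg support h
  rw [Function.uncurry_apply_pair, support_zeroFlat he, support_triangleFlat ht] at hs
  simp only [Set.ext_iff, Set.mem_insert_iff, Set.mem_singleton_iff] at hs
  have := mem_triples.1 ht
  have := hs i'; have := hs j'; have := hs l'
  omega

theorem disjoint_zeroFlats_productFlats : Disjoint (zeroFlats n) (productFlats n) := by
  rw [Set.disjoint_left]
  rintro _ ⟨⟨i, j⟩, he, rfl⟩ ⟨⟨⟨⟨i', j'⟩, ⟨k', l'⟩⟩, s⟩, ⟨hp, -⟩, h⟩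
  have hs := congrArg support h
  rw [Function.uncurry_apply_pair, support_zeroFlat he, support_productFlat hp] at hs
  simp only [Set.ext_iff, Set.mem_insert_iff, Set.mem_singleton_iff] at hs
  have := mem_sortedDisjointEdgePairs.1 hp
  simp only [mem_edges, disjoint_pair_pair] at this
  have := hs i'; have := hs j'; have := hs k'; have := hs l'
  omega

theorem disjoint_triangleFlats_productFlats : Disjoint (triangleFlats n) (productFlats n) := by
  rw [Set.disjoint_left]
  rintro _ ⟨⟨⟨i, j, l⟩, s⟩, ⟨ht, -⟩, rfl⟩ ⟨⟨⟨⟨i', j'⟩, ⟨k', l'⟩⟩, s'⟩, ⟨hp, -⟩, h⟩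
  have hs := congrArg support h
  rw [Function.uncurry_apply_pair, Function.uncurry_apply_pair, support_triangleFlat ht,
    support_productFlat hp] at hs
  simp only [Set.ext_iff, Set.mem_insert_iff, Set.mem_singleton_iff] at hs
  have := mem_triples.1 ht
  have := mem_sortedDisjointEdgePairs.1 hp
  simp only [mem_edges, disjoint_pair_pair] at this
  have := hs i'; have := hs j'; have := hs k'; have := hs l'
  omega

theorem ncard_normalFormFlats : (normalFormFlats n).ncard =
    #(edges n) + 4 * #(triples n) + 4 * #(sortedDisjointEdgePairs n) := by
  have hZ : (zeroFlats n).Finite := (Set.toFinite _).image _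
  have hT : (triangleFlats n).Finite := (Set.toFinite _).image _
  have hP : (productFlats n).Finite := (Set.toFinite _).image _
  rw [normalFormFlats, Set.ncard_union_eq _ (hZ.union hT) hP,
    Set.ncard_union_eq disjoint_zeroFlats_triangleFlats hZ hT, zeroFlats, triangleFlats,
    productFlats, zeroFlat_injOn.ncard_image, triangleFlat_injOn.ncard_image,
    productFlat_injOn.ncard_image, Set.ncard_prod, Set.ncard_prod, Set.ncard_univ,
    Nat.card_eq_fintype_card, Fintype.card_prod, Fintype.card_units_int]
  · simp only [Set.ncard_coe_finset]
    ring
  · exact Set.disjoint_union_left.2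
      ⟨disjoint_zeroFlats_productFlats, disjoint_triangleFlats_productFlats⟩

theorem card_edges : #(edges n) = n.choose 2 := by
  rw [edges, Fintype.card_product_filter_lt, Fintype.card_fin]

theorem card_triples : #(triples n) = n.choose 3 := by
  have fiber (l : Fin n) : #{t ∈ triples n | t.2.2 = l} = (l : ℕ).choose 2 := by
    rw [← Fin.card_Iio l, ← card_product_filter_lt]
    refine card_nbij' (fun t => (t.1, t.2.1)) (fun x => (x.1, x.2, l)) ?_ ?_ ?_ ?_
    · rintro ⟨i, j, l'⟩
      simp only [coe_filter, mem_triples, Set.mem_ofPred_eq, mem_product, mem_Iio]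
      rintro ⟨⟨hij, hjl⟩, rfl⟩
      exact ⟨⟨hij.trans hjl, hjl⟩, hij⟩
    · rintro ⟨i, j⟩
      simp only [coe_filter, mem_triples, Set.mem_ofPred_eq, mem_product, mem_Iio]
      rintro ⟨⟨-, hjl⟩, hij⟩
      exact ⟨⟨hij, hjl⟩, trivial⟩
    · rintro ⟨i, j, l'⟩
      simp only [coe_filter, Set.mem_ofPred_eq]
      rintro ⟨-, rfl⟩
      rfl
    · intro x _
      rfl
  rw [card_eq_sum_card_fiberwise (f := fun t => t.2.2) (t := univ) (fun _ _ => mem_univ _)]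
  simp only [fiber]
  rw [Fin.sum_univ_eq_sum_range (fun m => m.choose 2), Nat.sum_range_choose_eq_choose_succ]

theorem card_disjointEdgePairs : #(disjointEdgePairs n) = n.choose 2 * (n - 2).choose 2 := by
  rw [disjointEdgePairs, card_filter, sum_product, ← card_edges, ← smul_eq_mul, ← sum_const]
  refine sum_congr rfl fun e he => ?_
  rw [← card_filter]
  have hcompl : #({e.1, e.2}ᶜ : Finset (Fin n)) = n - 2 := by
    rw [card_compl, card_pair (mem_edges.1 he).ne, Fintype.card_fin]
  rw [← hcompl, ← card_product_filter_lt]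
  congr 1
  ext f
  simp [edges]
  tauto

theorem two_mul_card_sortedDisjointEdgePairs :
    2 * #(sortedDisjointEdgePairs n) = #(disjointEdgePairs n) := by
  rw [← card_filter_add_card_filter_not (s := disjointEdgePairs n) (fun p => p.1.1 < p.2.1),
    two_mul]
  congr 1
  refine card_equiv (Equiv.prodComm (Fin n × Fin n) (Fin n × Fin n))
    fun ⟨⟨i, j⟩, ⟨k, l⟩⟩ => ?_
  simp only [sortedDisjointEdgePairs, disjointEdgePairs, mem_filter, mem_product, mem_edges,
    Equiv.prodComm_apply, Prod.swap_prod_mk, disjoint_pair_pair]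
  omega

end TypeD

/-- For `n ≥ 2`, the number of codimension-two flats of the type `D_n`
reflection arrangement equals `n(n-1)(3n²-11n+13)/6`. -/
theorem stmt8 (n : ℕ) (hn : 2 ≤ n) :
    (6 : ℤ) * ((codimTwoFlats n (DnArrangement n)).ncard : ℤ) =
      (n : ℤ) * ((n : ℤ) - 1) * (3 * (n : ℤ) ^ 2 - 11 * (n : ℤ) + 13) := by
  rw [TypeD.codimTwoFlats_DnArrangement hn, TypeD.ncard_normalFormFlats, TypeD.card_edges,
    TypeD.card_triples]
  have hpairs := TypeD.two_mul_card_sortedDisjointEdgePairs (n := n)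
  rw [TypeD.card_disjointEdgePairs] at hpairs
  obtain ⟨m, rfl⟩ := Nat.exists_eq_add_of_le' hn
  have hchoose3 : ((m + 2).choose 3 : ℚ) = (m + 2) * (m + 1) * m / 6 := by
    rw [Nat.cast_choose_eq_ascPochhammer_div]
    simp [ascPochhammer_succ_eval, Nat.factorial]
    ring
  rw [Nat.add_sub_cancel] at hpairs
  qify at hpairs ⊢
  rw [hchoose3, Nat.cast_choose_two, Nat.cast_choose_two] at *
  push_cast at hpairs ⊢
  linear_combination 12 * hpairs
end
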